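/- Let A ∈ M_{s+1, n−s}(ℝ) with rows a₀,...,a_s viewed as vectors in V_• = span(e_{s+1},...,e_n) ⊆ ℝ^{n+1}. Let R_A = (I_{s+1} | A) and suppose w ∈ Λʲ(ℝ^{n+1}) represents a rank-j subgroup of ℤ^{n+1} and satisfies max_{0 ≤ i ≤ s} max_{J ⊆ {1,...,n}, #J = j−1} |⟨(e_i + a_i) ∧ e_J, w⟩| < 1. Then ‖w‖ ≤ C(1 + ‖π_•(w)‖), where π_• is the orthogonal projection onto Λ(V_•) and C is a constant depending only on A. -/

import Mathlib

open Finset Real ENNReal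

/-- The index `0` in `Fin (m + 1 + c)`. -/
def zeroIdx (m c : ℕ) : Fin (m + 1 + c) := ⟨0, by omega⟩

/-- The coefficient `⟨e_i ∧ e_J, w⟩` of `w ∈ Λ(ℝ^N)` in coordinates with respect to the
orthonormal basis `{e_I}`. -/
def wedgeCoeff {N : ℕ} (i : Fin N) (J : Finset (Fin N)) (w : Finset (Fin N) → ℝ) : ℝ :=
  if i ∈ J then 0 else (-1 : ℝ) ^ (J.filter (· < i)).card * w (insert i J)

/-- The `i`-th row of `A ∈ M_{m+1,c}(ℝ)` viewed as the vector
`a_i = Σ_{k} A i k · e_{m+1+k}` in `V_• = span(e_{m+1},…,e_{m+c}) ⊆ ℝ^{m+1+c}`. -/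
def rowVec {m c : ℕ} (A : Matrix (Fin (m + 1)) (Fin c) ℝ) (i : Fin (m + 1)) :
    Fin (m + 1 + c) → ℝ :=
  fun t => if h : m + 1 ≤ (t : ℕ) then A i ⟨(t : ℕ) - (m + 1), by omega⟩ else 0

/-- `⟨(e_i + a_i) ∧ e_J, w⟩`, the `(i, J)`-entry of `R_A c(w)` where `R_A = (I_{m+1} | A)`. -/
def rowCoeff {m c : ℕ} (A : Matrix (Fin (m + 1)) (Fin c) ℝ) (i : Fin (m + 1))
    (J : Finset (Fin (m + 1 + c))) (w : Finset (Fin (m + 1 + c)) → ℝ) : ℝ :=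
  wedgeCoeff (Fin.castLE (by omega) i) J w + ∑ t, rowVec A i t * wedgeCoeff t J w

/-- The orthogonal projection `π_•` of `Λ(ℝ^N)` onto `Λ(V_•)`,
`V_• = span(e_{m+1}, e_{m+2}, …)`, in coordinates. -/
def piBullet {N : ℕ} (m : ℕ) (w : Finset (Fin N) → ℝ) : Finset (Fin N) → ℝ :=
  fun I => if ∀ t ∈ I, m + 1 ≤ (t : ℕ) then w I else 0

/-- The Euclidean norm on `Λ(ℝ^N)` in coordinates. -/
noncomputable def normL {N : ℕ} (w : Finset (Fin N) → ℝ) : ℝ :=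
  Real.sqrt (∑ I : Finset (Fin N), w I ^ 2)

/-- `w ∈ Λʲ(ℝ^N)` represents a rank-`j` subgroup of `ℤ^N`: it is the wedge
`v₁ ∧ ⋯ ∧ v_j` of a `ℤ`-basis `v₁, …, v_j` (a linearly independent family of integer
vectors) of such a subgroup, in coordinates. -/
def Represents {N : ℕ} (j : ℕ) (w : Finset (Fin N) → ℝ) : Prop :=
  ∃ v : Fin j → (Fin N → ℤ), LinearIndependent ℤ v ∧ ∀ I : Finset (Fin N),
    w I = if h : I.card = j then
      Matrix.det (Matrix.of fun a b : Fin j => ((v a (I.orderIsoOfFin h b) : ℤ) : ℝ))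
    else 0

/-- The higher order Diophantine exponent `ω_j(A)` of `A ∈ M_{m+1,c}(ℝ)` (so that the
ambient space is `ℝ^{m+1+c}`): the supremum of `v` for which there exist `w ∈ Λʲ`
representing rank-`j` subgroups of `ℤ^{m+1+c}` with `‖π_•(w)‖` arbitrarily large such that
`max_{i, J ⊆ {1,…}, #J = j−1} |⟨(e_i + a_i) ∧ e_J, w⟩| < ‖π_•(w)‖^{−(v+1−j)/j}`. -/
noncomputable def omegaHigher (m c : ℕ) (A : Matrix (Fin (m + 1)) (Fin c) ℝ) (j : ℕ) :
    ℝ≥0∞ :=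
  sSup {e : ℝ≥0∞ | ∃ v : ℝ, e = ENNReal.ofReal v ∧ ∀ M : ℝ, 0 < M →
    ∃ w : Finset (Fin (m + 1 + c)) → ℝ, Represents j w ∧ M < normL (piBullet m w) ∧
      ∀ (i : Fin (m + 1)) (J : Finset (Fin (m + 1 + c))), zeroIdx m c ∉ J →
        J.card = j - 1 →
        |rowCoeff A i J w| < (normL (piBullet m w)) ^ (-((v + 1 - (j : ℝ)) / j))}

/-!
Order the coordinates `w_I`, `#I = j`, by the number `k` of indices of `I` in the head
`{0, …, m}`. If `k = 0`, then `w_I` is a coordinate of `π_•(w)`. Otherwise, let `i` be the least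
head index of `I` and `J = I ∖ {i}`; then `0 ∉ J`, and expanding
`⟨(e_i + a_i) ∧ e_J, w⟩ = ±w_I + Σ_t a_{i,t} ⟨e_t ∧ e_J, w⟩` expresses `w_I` through a quantity
of size `< 1` and coordinates `w_{J ∪ {t}}` with `t` in the tail, which have `k - 1` head indices.
Induction on `k` gives `|w_I| ≤ (1 + K)^k (1 + ‖π_•(w)‖)`, with `K` the total absolute mass of `A`.
-/

section Coordinates

variable {N : ℕ}

lemma normL_nonneg (w : Finset (Fin N) → ℝ) : 0 ≤ normL w := Real.sqrt_nonneg _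

lemma abs_le_normL (w : Finset (Fin N) → ℝ) (I : Finset (Fin N)) : |w I| ≤ normL w := by
  rw [normL, ← Real.sqrt_sq_eq_abs]
  exact Real.sqrt_le_sqrt
    (single_le_sum (f := fun I => w I ^ 2) (fun _ _ => sq_nonneg _) (mem_univ I))

lemma normL_le_of_forall_abs_le {w : Finset (Fin N) → ℝ} {D : ℝ} (h : ∀ I, |w I| ≤ D) :
    normL w ≤ √(2 ^ N) * D := by
  have hD : 0 ≤ D := (abs_nonneg _).trans (h ∅)
  have hsum : ∑ I, w I ^ 2 ≤ 2 ^ N * D ^ 2 :=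
    calc ∑ I, w I ^ 2 ≤ ∑ _I : Finset (Fin N), D ^ 2 := sum_le_sum fun I _ => by
          rw [← sq_abs]; exact pow_le_pow_left₀ (abs_nonneg _) (h I) 2
      _ = 2 ^ N * D ^ 2 := by simp [Fintype.card_finset]
  calc normL w ≤ √(2 ^ N * D ^ 2) := Real.sqrt_le_sqrt hsum
    _ = √(2 ^ N) * D := by rw [Real.sqrt_mul (by positivity), Real.sqrt_sq hD]

lemma abs_le_normL_piBullet (m : ℕ) (w : Finset (Fin N) → ℝ) {I : Finset (Fin N)}
    (hI : ∀ t ∈ I, m + 1 ≤ (t : ℕ)) : |w I| ≤ normL (piBullet m w) := by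
  have hpi : piBullet m w I = w I := if_pos hI
  exact hpi ▸ abs_le_normL (piBullet m w) I

lemma wedgeCoeff_of_mem {i : Fin N} {J : Finset (Fin N)} (w : Finset (Fin N) → ℝ)
    (hi : i ∈ J) : wedgeCoeff i J w = 0 :=
  if_pos hi

lemma abs_wedgeCoeff_of_notMem {i : Fin N} {J : Finset (Fin N)} (w : Finset (Fin N) → ℝ)
    (hi : i ∉ J) : |wedgeCoeff i J w| = |w (insert i J)| := by
  simp [wedgeCoeff, hi, abs_mul]

lemma Represents.eq_zero_of_card_ne {j : ℕ} {w : Finset (Fin N) → ℝ} (hw : Represents j w)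
    {I : Finset (Fin N)} (hI : I.card ≠ j) : w I = 0 := by
  obtain ⟨v, -, hv⟩ := hw
  rw [hv, dif_neg hI]

def headCard (m : ℕ) (I : Finset (Fin N)) : ℕ := #(I.filter (·.val < m + 1))

lemma headCard_le (m : ℕ) (I : Finset (Fin N)) : headCard m I ≤ N :=
  (card_filter_le _ _).trans ((card_le_univ I).trans (Fintype.card_fin _).le)

end Coordinates

section Rows

variable {m c : ℕ} (A : Matrix (Fin (m + 1)) (Fin c) ℝ)

def rowAbsSum : ℝ := ∑ i, ∑ t, |rowVec A i t|

lemma rowAbsSum_nonneg : 0 ≤ rowAbsSum A :=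
  sum_nonneg fun _ _ => sum_nonneg fun _ _ => abs_nonneg _

lemma sum_abs_rowVec_le_rowAbsSum (i : Fin (m + 1)) : ∑ t, |rowVec A i t| ≤ rowAbsSum A :=
  single_le_sum (f := fun i => ∑ t, |rowVec A i t|)
    (fun _ _ => sum_nonneg fun _ _ => abs_nonneg _) (mem_univ i)

lemma rowVec_eq_zero_of_lt {i : Fin (m + 1)} {t : Fin (m + 1 + c)} (ht : (t : ℕ) < m + 1) :
    rowVec A i t = 0 :=
  dif_neg (by omega)

lemma abs_insert_le_rowCoeff (i : Fin (m + 1)) {J : Finset (Fin (m + 1 + c))}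
    (w : Finset (Fin (m + 1 + c)) → ℝ) (hi : Fin.castAdd c i ∉ J) :
    |w (insert (Fin.castAdd c i) J)|
      ≤ |rowCoeff A i J w| + |∑ t, rowVec A i t * wedgeCoeff t J w| := by
  rw [← abs_wedgeCoeff_of_notMem w hi]
  have : wedgeCoeff (Fin.castAdd c i) J w
      = rowCoeff A i J w - ∑ t, rowVec A i t * wedgeCoeff t J w :=
    (add_sub_cancel_right _ _).symm
  rw [this]
  exact abs_sub _ _

lemma abs_sum_rowVec_mul_wedgeCoeff_le (i : Fin (m + 1)) (J : Finset (Fin (m + 1 + c)))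
    (w : Finset (Fin (m + 1 + c)) → ℝ) {D : ℝ} (hD : 0 ≤ D)
    (h : ∀ t : Fin (m + 1 + c), m + 1 ≤ (t : ℕ) → t ∉ J → |w (insert t J)| ≤ D) :
    |∑ t, rowVec A i t * wedgeCoeff t J w| ≤ (∑ t, |rowVec A i t|) * D := by
  rw [sum_mul]
  refine (abs_sum_le_sum_abs _ _).trans (sum_le_sum fun t _ => ?_)
  rw [abs_mul]
  by_cases ht : (t : ℕ) < m + 1
  · simp [rowVec_eq_zero_of_lt A ht]
  by_cases htJ : t ∈ J
  · rw [wedgeCoeff_of_mem w htJ, abs_zero]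
    exact mul_le_mul_of_nonneg_left hD (abs_nonneg _)
  · rw [abs_wedgeCoeff_of_notMem w htJ]
    exact mul_le_mul_of_nonneg_left (h t (by omega) htJ) (abs_nonneg _)

lemma abs_le_of_rowCoeff_lt_one {j : ℕ} {w : Finset (Fin (m + 1 + c)) → ℝ}
    (hw : ∀ (i : Fin (m + 1)) (J : Finset (Fin (m + 1 + c))), zeroIdx m c ∉ J →
      J.card = j - 1 → |rowCoeff A i J w| < 1)
    (k : ℕ) (I : Finset (Fin (m + 1 + c))) (hIj : I.card = j) (hIk : headCard m I = k) :
    |w I| ≤ (1 + rowAbsSum A) ^ k * (1 + normL (piBullet m w)) := by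
  have hK := rowAbsSum_nonneg A
  have hB := normL_nonneg (piBullet m w)
  induction k generalizing I with
  | zero =>
    have hI : ∀ t ∈ I, m + 1 ≤ (t : ℕ) := by
      simpa [headCard, filter_eq_empty_iff] using hIk
    simpa using (abs_le_normL_piBullet m w hI).trans (le_add_of_nonneg_left zero_le_one)
  | succ k ih =>
    set K := rowAbsSum A
    set B := normL (piBullet m w)
    have hF : (I.filter (·.val < m + 1)).Nonempty := by
      rw [← card_pos]; unfold headCard at hIk; omega
    set i := (I.filter (·.val < m + 1)).min' hF
    obtain ⟨hiI, hi⟩ := mem_filter.mp (min'_mem _ hF)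
    set J := I.erase i
    have hJcard : J.card = j - 1 := by rw [card_erase_of_mem hiI, hIj]
    -- `0 ∈ I` would make `0` the least head index of `I`, so it is not in `J`.
    have hJ0 : zeroIdx m c ∉ J := fun h0 => by
      have hle : i ≤ zeroIdx m c :=
        min'_le _ _ (mem_filter.mpr ⟨mem_of_mem_erase h0, by simp [zeroIdx]⟩)
      have : i = zeroIdx m c := Fin.ext (by simp [zeroIdx] at hle ⊢; omega)
      rw [← this] at h0
      exact notMem_erase i I h0
    have htail : ∀ t : Fin (m + 1 + c), m + 1 ≤ (t : ℕ) → t ∉ J →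
        |w (insert t J)| ≤ (1 + K) ^ k * (1 + B) := fun t ht htJ =>
      ih _ (by rw [card_insert_of_notMem htJ, card_erase_add_one hiI, hIj]) (by
        rw [headCard, filter_insert, if_neg (not_lt.mpr ht), filter_erase,
          card_erase_of_mem (min'_mem _ hF)]
        unfold headCard at hIk; omega)
    set i₀ : Fin (m + 1) := ⟨i, hi⟩
    have hD : 1 ≤ (1 + K) ^ k * (1 + B) :=
      one_le_mul_of_one_le_of_one_le (one_le_pow₀ (by linarith)) (by linarith)
    calc |w I| ≤ |rowCoeff A i₀ J w| + |∑ t, rowVec A i₀ t * wedgeCoeff t J w| := by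
          have := abs_insert_le_rowCoeff A i₀ w (notMem_erase i I)
          rwa [show Fin.castAdd c i₀ = i from rfl, insert_erase hiI] at this
      _ ≤ 1 + K * ((1 + K) ^ k * (1 + B)) := by
          gcongr
          · exact (hw i₀ J hJ0 hJcard).le
          · exact (abs_sum_rowVec_mul_wedgeCoeff_le A i₀ J w (by positivity) htail).trans
              (by gcongr; exact sum_abs_rowVec_le_rowAbsSum A i₀)
      _ ≤ (1 + K) ^ (k + 1) * (1 + B) := by rw [pow_succ]; nlinarith

end Rows

/-- Lemma 5.1: if `w` represents a rank-`j` subgroup of `ℤ^{m+1+c}` and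
`max_{0≤i≤m} max_{J ⊆ {1,…}, #J = j−1} |⟨(e_i + a_i) ∧ e_J, w⟩| < 1`, then
`‖w‖ ≤ C (1 + ‖π_•(w)‖)` for a constant `C` depending only on `A`. -/
theorem norm_le_of_rowCoeff_lt_one {m c : ℕ} (A : Matrix (Fin (m + 1)) (Fin c) ℝ) :
    ∃ C : ℝ, 0 < C ∧ ∀ (j : ℕ), 1 ≤ j → ∀ w : Finset (Fin (m + 1 + c)) → ℝ,
      Represents j w →
      (∀ (i : Fin (m + 1)) (J : Finset (Fin (m + 1 + c))), zeroIdx m c ∉ J →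
        J.card = j - 1 → |rowCoeff A i J w| < 1) →
      normL w ≤ C * (1 + normL (piBullet m w)) := by
  have hK : 1 ≤ 1 + rowAbsSum A := le_add_of_nonneg_right (rowAbsSum_nonneg A)
  refine ⟨√(2 ^ (m + 1 + c)) * (1 + rowAbsSum A) ^ (m + 1 + c), by positivity, ?_⟩
  intro j _ w hrep hsmall
  have hB := normL_nonneg (piBullet m w)
  rw [mul_assoc]
  refine normL_le_of_forall_abs_le fun I => ?_
  by_cases hI : I.card = j
  · calc |w I| ≤ (1 + rowAbsSum A) ^ headCard m I * (1 + normL (piBullet m w)) :=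
          abs_le_of_rowCoeff_lt_one A hsmall _ I hI rfl
      _ ≤ (1 + rowAbsSum A) ^ (m + 1 + c) * (1 + normL (piBullet m w)) := by
          gcongr
          exact headCard_le m I
  · rw [hrep.eq_zero_of_card_ne hI, abs_zero]
    positivity
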